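/- For φ₁ ≠ φ₂ in the open unit disc, the nth trigonometric moment of Z ~ EC*(φ₁, φ₂) equals [(1−|φ₂|²)(1−conj(φ₁)φ₂)φ₁^{n+1} − (1−|φ₁|²)(1−φ₁conj(φ₂))φ₂^{n+1}] / [(φ₁−φ₂)(1−|φ₁conj(φ₂)|²)]. -/

import Mathlib

open Real Complex intervalIntegral

/-- The density (with respect to arc length) of the `EC*(φ₁, φ₂)` distribution on
the unit circle. -/
noncomputable def ecDensity (φ₁ φ₂ z : ℂ) : ℝ :=
  (1 / (2 * Real.pi)) *
    (‖1 - φ₁ * (starRingEnd ℂ) φ₂‖ ^ 2 /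
      (1 - ‖φ₁ * (starRingEnd ℂ) φ₂‖ ^ 2)) *
    ((1 - ‖φ₁‖ ^ 2) / ‖z - φ₁‖ ^ 2) *
    ((1 - ‖φ₂‖ ^ 2) / ‖z - φ₂‖ ^ 2)

/-!
On the unit circle the Poisson kernel is rational: `‖z - φ‖² z = (z - φ)(1 - φ̄ z)`. Hence
`zⁿ` times the density, integrated against `dθ = dz / (i z)`, becomes
`(2πi)⁻¹ ∮ h z / ((z - φ₁)(z - φ₂)) dz` with `h = ecNumerator φ₁ φ₂ n` holomorphic on the
closed disc. Partial fractions and the Cauchy integral formula evaluate this to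
`(h φ₁ - h φ₂) / (φ₁ - φ₂)`.
-/

open Metric ComplexConjugate

variable {E : Type*} [NormedAddCommGroup E] [NormedSpace ℂ E]

theorem integral_comp_exp_mul_I_eq_circleIntegral (G : ℂ → E) :
    ∫ θ in (-π)..π, G (exp (θ * I)) = ∮ z in C(0, 1), (I * z)⁻¹ • G z := by
  have hper : Function.Periodic (fun θ : ℝ ↦ G (exp (θ * I))) (2 * π) := fun θ ↦ by
    simp only [ofReal_add, ofReal_mul, ofReal_ofNat, add_mul, Complex.exp_add, exp_two_pi_mul_I,
      mul_one]
  have hshift := hper.intervalIntegral_add_eq (-π) 0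
  rw [show -π + 2 * π = π by ring, zero_add] at hshift
  rw [hshift, circleIntegral]
  refine integral_congr fun θ _ ↦ ?_
  simp only [deriv_circleMap, circleMap_zero, ofReal_one, one_mul, smul_smul]
  rw [mul_comm (Complex.exp _) I, mul_inv_cancel₀ (mul_ne_zero I_ne_zero (exp_ne_zero _)), one_smul]

theorem DiffContOnCl.circleIntegral_sub_mul_sub_inv_smul [CompleteSpace E] {f : ℂ → E}
    {c a b : ℂ} {R : ℝ} (hf : DiffContOnCl ℂ f (ball c R)) (ha : a ∈ ball c R)
    (hb : b ∈ ball c R) (hab : a ≠ b) :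
    (∮ z in C(c, R), ((z - a) * (z - b))⁻¹ • f z) = (2 * π * I / (a - b) : ℂ) • (f a - f b) := by
  have hR : 0 < R := pos_of_mem_ball ha
  have hcont : ContinuousOn f (sphere c R) :=
    hf.continuousOn.mono (sphere_subset_closedBall.trans (closure_ball c hR.ne').ge)
  have hne : ∀ w ∈ ball c R, ∀ z ∈ sphere c R, z - w ≠ 0 := fun w hw z hz ↦
    sub_ne_zero.2 (sphere_disjoint_ball.ne_of_mem hz hw)
  have hint : ∀ w ∈ ball c R, CircleIntegrable (fun z ↦ (z - w)⁻¹ • f z) c R := fun w hw ↦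
    (((continuousOn_id.sub continuousOn_const).inv₀ (hne w hw)).smul hcont).circleIntegrable hR.le
  have hsplit : Set.EqOn (fun z ↦ ((z - a) * (z - b))⁻¹ • f z)
      (fun z ↦ (a - b)⁻¹ • ((z - a)⁻¹ • f z - (z - b)⁻¹ • f z)) (sphere c R) := by
    intro z hz
    simp only [smul_smul, ← sub_smul]
    congr 1
    field_simp [hne a ha z hz, hne b hb z hz, sub_ne_zero.2 hab]
    ring
  rw [circleIntegral.integral_congr hR.le hsplit, circleIntegral.integral_smul,
    circleIntegral.integral_sub (hint a ha) (hint b hb), hf.circleIntegral_sub_inv_smul ha,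
    hf.circleIntegral_sub_inv_smul hb, ← smul_sub, smul_smul, div_eq_inv_mul]

theorem ofReal_norm_sub_sq_mul_of_norm_eq_one {z : ℂ} (hz : ‖z‖ = 1) (φ : ℂ) :
    ((‖z - φ‖ ^ 2 : ℝ) : ℂ) * z = (z - φ) * (1 - conj φ * z) := by
  have hzz : conj z * z = 1 := by rw [conj_mul', hz]; norm_num
  rw [ofReal_pow, ← mul_conj', map_sub]
  linear_combination (z - φ) * hzz

theorem ofReal_poissonKernel_of_norm_eq_one {z : ℂ} (hz : ‖z‖ = 1) (φ : ℂ) :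
    (((1 - ‖φ‖ ^ 2) / ‖z - φ‖ ^ 2 : ℝ) : ℂ)
      = ((1 - ‖φ‖ ^ 2 : ℝ) : ℂ) * z / ((z - φ) * (1 - conj φ * z)) := by
  have hz0 : z ≠ 0 := norm_ne_zero_iff.1 (by rw [hz]; exact one_ne_zero)
  rw [← ofReal_norm_sub_sq_mul_of_norm_eq_one hz, mul_div_mul_right _ _ hz0, ofReal_div]

theorem one_sub_conj_mul_ne_zero {φ w : ℂ} (hφ : ‖φ‖ < 1) (hw : ‖w‖ ≤ 1) :
    1 - conj φ * w ≠ 0 := by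
  have hlt : ‖conj φ * w‖ < 1 := by
    rw [norm_mul, norm_conj]
    exact mul_lt_one_of_nonneg_of_lt_one_left (norm_nonneg _) hφ hw
  exact sub_ne_zero.2 fun h ↦ by simp [← h] at hlt

theorem one_sub_ofReal_norm_sq_ne_zero {w : ℂ} (hw : ‖w‖ < 1) :
    (1 : ℂ) - (‖w‖ : ℂ) ^ 2 ≠ 0 := by
  rw [← conj_mul']
  exact one_sub_conj_mul_ne_zero hw hw.le

theorem norm_mul_conj_lt_one {φ₁ φ₂ : ℂ} (hφ₁ : ‖φ₁‖ < 1) (hφ₂ : ‖φ₂‖ < 1) :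
    ‖φ₁ * conj φ₂‖ < 1 := by
  rw [norm_mul, norm_conj]
  exact mul_lt_one_of_nonneg_of_lt_one_left (norm_nonneg _) hφ₁ hφ₂.le

noncomputable def ecNumerator (φ₁ φ₂ : ℂ) (n : ℕ) (w : ℂ) : ℂ :=
  ((‖1 - φ₁ * conj φ₂‖ ^ 2 / (1 - ‖φ₁ * conj φ₂‖ ^ 2) * (1 - ‖φ₁‖ ^ 2) * (1 - ‖φ₂‖ ^ 2) : ℝ) : ℂ)
    * w ^ (n + 1) / ((1 - conj φ₁ * w) * (1 - conj φ₂ * w))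

theorem differentiableOn_ecNumerator {φ₁ φ₂ : ℂ} (hφ₁ : ‖φ₁‖ < 1) (hφ₂ : ‖φ₂‖ < 1) (n : ℕ) :
    DifferentiableOn ℂ (ecNumerator φ₁ φ₂ n) (closedBall 0 1) := by
  refine DifferentiableOn.div (by fun_prop) (by fun_prop) fun w hw ↦ ?_
  rw [mem_closedBall_zero_iff] at hw
  exact mul_ne_zero (one_sub_conj_mul_ne_zero hφ₁ hw) (one_sub_conj_mul_ne_zero hφ₂ hw)

theorem inv_I_mul_smul_pow_mul_ecDensity_of_norm_eq_one (φ₁ φ₂ : ℂ) (n : ℕ) {z : ℂ}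
    (hz : ‖z‖ = 1) :
    (I * z)⁻¹ • (z ^ n * (ecDensity φ₁ φ₂ z : ℂ))
      = (2 * π * I)⁻¹ * (((z - φ₁) * (z - φ₂))⁻¹ • ecNumerator φ₁ φ₂ n z) := by
  simp only [ecDensity, ecNumerator, ofReal_mul, ofReal_poissonKernel_of_norm_eq_one hz,
    smul_eq_mul]
  push_cast
  field_simp
  ring

theorem ecNumerator_left {φ₁ φ₂ : ℂ} (hφ₁ : ‖φ₁‖ < 1) (hφ₂ : ‖φ₂‖ < 1) (n : ℕ) :
    ecNumerator φ₁ φ₂ n φ₁ = ((1 - ‖φ₂‖ ^ 2 : ℝ) : ℂ) * (1 - conj φ₁ * φ₂) * φ₁ ^ (n + 1)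
      / ((1 - ‖φ₁ * conj φ₂‖ ^ 2 : ℝ) : ℂ) := by
  have h₁ := one_sub_ofReal_norm_sq_ne_zero hφ₁
  have h₂₁ : 1 - φ₁ * conj φ₂ ≠ 0 :=
    mul_comm (conj φ₂) φ₁ ▸ one_sub_conj_mul_ne_zero hφ₂ hφ₁.le
  simp only [ecNumerator]
  push_cast
  rw [← mul_conj' (1 - _), conj_mul']
  simp only [map_sub, map_one, map_mul, conj_conj]
  field_simp

theorem ecNumerator_right {φ₁ φ₂ : ℂ} (hφ₁ : ‖φ₁‖ < 1) (hφ₂ : ‖φ₂‖ < 1) (n : ℕ) :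
    ecNumerator φ₁ φ₂ n φ₂ = ((1 - ‖φ₁‖ ^ 2 : ℝ) : ℂ) * (1 - φ₁ * conj φ₂) * φ₂ ^ (n + 1)
      / ((1 - ‖φ₁ * conj φ₂‖ ^ 2 : ℝ) : ℂ) := by
  have h₂ := one_sub_ofReal_norm_sq_ne_zero hφ₂
  have h₁₂ := one_sub_conj_mul_ne_zero hφ₁ hφ₂.le
  simp only [ecNumerator]
  push_cast
  rw [← mul_conj' (1 - _), conj_mul']
  simp only [map_sub, map_one, map_mul, conj_conj]
  field_simp

/-- The `n`th trigonometric moment of `Z ~ EC*(φ₁, φ₂)` for `φ₁ ≠ φ₂` in the open unit disc. -/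
theorem ecStar_trig_moment (n : ℕ) (φ₁ φ₂ : ℂ)
    (hφ₁ : ‖φ₁‖ < 1) (hφ₂ : ‖φ₂‖ < 1) (hne : φ₁ ≠ φ₂) :
    ∫ θ in (-Real.pi)..Real.pi,
      (Complex.exp (θ * Complex.I)) ^ n *
        ((ecDensity φ₁ φ₂ (Complex.exp (θ * Complex.I)) : ℝ) : ℂ)
      = (((1 - ‖φ₂‖ ^ 2 : ℝ) : ℂ) * (1 - (starRingEnd ℂ) φ₁ * φ₂) * φ₁ ^ (n + 1)
          - ((1 - ‖φ₁‖ ^ 2 : ℝ) : ℂ) * (1 - φ₁ * (starRingEnd ℂ) φ₂) * φ₂ ^ (n + 1)) /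
        ((φ₁ - φ₂) * ((1 - ‖φ₁ * (starRingEnd ℂ) φ₂‖ ^ 2 : ℝ) : ℂ)) := by
  have hD := one_sub_ofReal_norm_sq_ne_zero (norm_mul_conj_lt_one hφ₁ hφ₂)
  have hf : DiffContOnCl ℂ (ecNumerator φ₁ φ₂ n) (ball 0 1) :=
    ((differentiableOn_ecNumerator hφ₁ hφ₂ n).mono closure_ball_subset_closedBall).diffContOnCl
  rw [integral_comp_exp_mul_I_eq_circleIntegral (fun z ↦ z ^ n * (ecDensity φ₁ φ₂ z : ℂ)),
    circleIntegral.integral_congr zero_le_one fun z hz ↦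
      inv_I_mul_smul_pow_mul_ecDensity_of_norm_eq_one φ₁ φ₂ n (mem_sphere_zero_iff_norm.1 hz),
    circleIntegral.integral_const_mul,
    hf.circleIntegral_sub_mul_sub_inv_smul (mem_ball_zero_iff.2 hφ₁) (mem_ball_zero_iff.2 hφ₂) hne,
    ecNumerator_left hφ₁ hφ₂, ecNumerator_right hφ₁ hφ₂, smul_eq_mul]
  push_cast at hD ⊢
  field_simp [sub_ne_zero.2 hne]
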